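/- Let R > 0 and n ≥ 2. There do not exist masses m_1, …, m_n > 0 and pairwise distinct points c_1, …, c_n ∈ ℂ with Im c_k > 0 for all k that satisfy the parabolic relative-equilibrium equations. In other words, in the curved n-body problem with negative curvature there are no parabolic relative equilibria. -/

import Mathlib

open Complex ComplexConjugate Finset

/-- The quantity `Θ_{3,(k,j)}` appearing in the denominators of the equations of
motion of the curved `n`-body problem in the Poincaré upper half plane. -/
noncomputable def halfTheta (z w : ℂ) : ℝ :=
  (((conj z + z) * (conj w + w)
      - 2 * ((((‖z‖) ^ 2 + (‖w‖) ^ 2 : ℝ)) : ℂ)) ^ 2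
    - (conj z - z) ^ 2 * (conj w - w) ^ 2).re

/-- The points `c k` satisfy the parabolic relative-equilibrium equations in the
Poincaré upper half plane with parameter `R` and masses `m`. -/
def ParabolicRelEq (R : ℝ) {n : ℕ} (m : Fin n → ℝ) (c : Fin n → ℂ) : Prop :=
  ∀ k : Fin n,
    -(R : ℂ) / (4 * (c k - conj (c k)) ^ 4)
      = ∑ j ∈ Finset.univ.erase k,
          (m j : ℂ) * (conj (c j) - c j) ^ 2 * (c k - c j) * (conj (c j) - c k)
            / (((halfTheta (c k) (c j)) ^ ((3 : ℝ) / 2) : ℝ) : ℂ)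

/-!
Take the real part of the `k`-th equation and weight it by `m k * (c k).im ^ 2`. Since
`(c̄ - c)² = -4 (Im c)²` and `(c - c̄)⁴ = 16 (Im c)⁴`, the left-hand side becomes
`-R m_k / (64 (Im c_k)²) < 0`, while on the right the `(k, j)` and `(j, k)` terms add up to
`8 m_k m_j (Im c_k)² (Im c_j)² (Re c_k - Re c_j)² / Θ^{3/2} ≥ 0`. Summing over `k` is absurd.
-/

lemma sum_sum_erase_nonneg_of_add_swap_nonneg {ι M : Type*} [Fintype ι] [DecidableEq ι]
    [AddCommGroup M] [LinearOrder M] [IsOrderedAddMonoid M]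
    (f : ι → ι → M) (hf : ∀ i j, i ≠ j → 0 ≤ f i j + f j i) :
    0 ≤ ∑ i, ∑ j ∈ univ.erase i, f i j := by
  have hswap : ∑ i, ∑ j ∈ univ.erase i, f j i = ∑ i, ∑ j ∈ univ.erase i, f i j :=
    sum_comm' fun i j => by simp [and_comm, eq_comm]
  have hsum : 0 ≤ ∑ i, ∑ j ∈ univ.erase i, (f i j + f j i) :=
    sum_nonneg fun i _ => sum_nonneg fun j hj => hf i j (ne_of_mem_erase hj).symm
  simp only [sum_add_distrib, hswap] at hsum
  exact nonneg_add_self_iff.mp hsum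

lemma halfTheta_eq (z w : ℂ) : halfTheta z w =
    4 * (((z.re - w.re) ^ 2 + (z.im - w.im) ^ 2) * ((z.re - w.re) ^ 2 + (z.im + w.im) ^ 2)) := by
  simp only [halfTheta, Complex.sq_norm, Complex.normSq_apply]
  simp only [Complex.sub_re, Complex.mul_re, Complex.mul_im, Complex.add_re, Complex.add_im,
    Complex.conj_re, Complex.conj_im, Complex.ofReal_re, Complex.ofReal_im, Complex.sub_im,
    Complex.re_ofNat, Complex.im_ofNat, sq]
  ring

lemma halfTheta_nonneg (z w : ℂ) : 0 ≤ halfTheta z w := by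
  rw [halfTheta_eq]; positivity

lemma halfTheta_comm (z w : ℂ) : halfTheta z w = halfTheta w z := by
  rw [halfTheta_eq, halfTheta_eq]; ring

lemma conj_sub_self_sq (z : ℂ) : (conj z - z) ^ 2 = ((-4 * z.im ^ 2 : ℝ) : ℂ) := by
  rw [← neg_sub, neg_sq, sub_conj, mul_pow, I_sq]; push_cast; ring

lemma sub_conj_pow_four (z : ℂ) : (z - conj z) ^ 4 = ((16 * z.im ^ 4 : ℝ) : ℂ) := by
  rw [show (z - conj z) ^ 4 = ((z - conj z) ^ 2) ^ 2 by ring, ← neg_sub, neg_sq,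
    conj_sub_self_sq]
  push_cast; ring

lemma re_mul_sub_add_swap (a b : ℂ) :
    ((a - b) * (conj b - a)).re + ((b - a) * (conj a - b)).re = -2 * (a.re - b.re) ^ 2 := by
  simp only [mul_re, sub_re, sub_im, conj_re, conj_im]
  ring

/-- The real part of the `j`-th summand of the `k`-th equation, weighted by `m k * (c k).im ^ 2`. -/
noncomputable def pairTerm {ι : Type*} (m : ι → ℝ) (c : ι → ℂ) (k j : ι) : ℝ :=
  -4 * m k * m j * (c k).im ^ 2 * (c j).im ^ 2 * ((c k - c j) * (conj (c j) - c k)).re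
    / halfTheta (c k) (c j) ^ ((3 : ℝ) / 2)

lemma pairTerm_add_swap {ι : Type*} (m : ι → ℝ) (c : ι → ℂ) (k j : ι) :
    pairTerm m c k j + pairTerm m c j k
      = 8 * m k * m j * (c k).im ^ 2 * (c j).im ^ 2 * ((c k).re - (c j).re) ^ 2
          / halfTheta (c k) (c j) ^ ((3 : ℝ) / 2) := by
  rw [pairTerm, pairTerm, halfTheta_comm (c j), ← add_div]
  congr 1
  linear_combination
    (-4 * m k * m j * (c k).im ^ 2 * (c j).im ^ 2) * re_mul_sub_add_swap (c k) (c j)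

lemma pairTerm_add_swap_nonneg {ι : Type*} {m : ι → ℝ} (c : ι → ℂ) {k j : ι}
    (hk : 0 ≤ m k) (hj : 0 ≤ m j) : 0 ≤ pairTerm m c k j + pairTerm m c j k := by
  rw [pairTerm_add_swap]
  have := Real.rpow_nonneg (halfTheta_nonneg (c k) (c j)) ((3 : ℝ) / 2)
  positivity

lemma ParabolicRelEq.weighted_re_eq {R : ℝ} {n : ℕ} {m : Fin n → ℝ} {c : Fin n → ℂ}
    (h : ParabolicRelEq R m c) (k : Fin n) (hk : (c k).im ≠ 0) :
    -R * m k / (64 * (c k).im ^ 2) = ∑ j ∈ univ.erase k, pairTerm m c k j := by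
  have hre := congrArg re (h k)
  simp only [sub_conj_pow_four, conj_sub_self_sq, re_sum] at hre
  have hlhs : -(R : ℂ) / (4 * ((16 * (c k).im ^ 4 : ℝ) : ℂ))
      = ((-R / (64 * (c k).im ^ 4) : ℝ) : ℂ) := by
    push_cast; ring
  have hterm : ∀ j,
      ((m j : ℂ) * ((-4 * (c j).im ^ 2 : ℝ) : ℂ) * (c k - c j) * (conj (c j) - c k)
        / ((halfTheta (c k) (c j) ^ ((3 : ℝ) / 2) : ℝ) : ℂ)).re
      = m j * (-4 * (c j).im ^ 2) * ((c k - c j) * (conj (c j) - c k)).re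
          / halfTheta (c k) (c j) ^ ((3 : ℝ) / 2) := by
    intro j
    rw [Complex.div_ofReal_re, mul_assoc _ (c k - c j), ← ofReal_mul, re_ofReal_mul]
  rw [hlhs, ofReal_re] at hre
  simp only [hterm] at hre
  have hw : -R * m k / (64 * (c k).im ^ 2) = m k * (c k).im ^ 2 * (-R / (64 * (c k).im ^ 4)) := by
    field_simp
  rw [hw, hre, mul_sum]
  refine sum_congr rfl fun j _ => ?_
  rw [pairTerm]
  ring

/-- In the curved `n`-body problem with negative curvature there are no parabolic
relative equilibria. -/
theorem no_parabolic_relative_equilibria (R : ℝ) (hR : 0 < R) (n : ℕ) (hn : 2 ≤ n) :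
    ¬ ∃ (m : Fin n → ℝ) (c : Fin n → ℂ),
        (∀ k, 0 < m k) ∧ (∀ k, 0 < (c k).im) ∧
        (∀ k j, k ≠ j → c k ≠ c j) ∧ ParabolicRelEq R m c := by
  rintro ⟨m, c, hm, him, -, heq⟩
  have : Nonempty (Fin n) := ⟨⟨0, by omega⟩⟩
  have hneg : ∑ k, -R * m k / (64 * (c k).im ^ 2) < 0 := by
    refine sum_neg (fun k _ => ?_) univ_nonempty
    have := him k
    refine div_neg_of_neg_of_pos ?_ (by positivity)
    exact mul_neg_of_neg_of_pos (neg_neg_of_pos hR) (hm k)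
  have hnonneg : 0 ≤ ∑ k, ∑ j ∈ univ.erase k, pairTerm m c k j :=
    sum_sum_erase_nonneg_of_add_swap_nonneg _ fun k j _ =>
      pairTerm_add_swap_nonneg c (hm k).le (hm j).le
  rw [sum_congr rfl fun k _ => heq.weighted_re_eq k (him k).ne'] at hneg
  linarith
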